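/- Let q ≥ 2 and let G be a finite connected bipartite (q+1)-regular simple graph of girth 12 on 2(q³+1)(q²+q+1) vertices (a (q+1,12)-cage, the incidence graph of a generalized hexagon of order q). Then G is not radio graceful. -/

import Mathlib

open SimpleGraph

/-- A radio labeling of a graph `G`: for all distinct vertices `u, v`,
`|f u - f v| + d(u,v) ≥ diam(G) + 1`. -/
def IsRadioLabeling {V : Type*} (G : SimpleGraph V) (f : V → ℕ) : Prop :=
  ∀ u v : V, u ≠ v →
    (G.diam : ℤ) + 1 ≤ |(f u : ℤ) - (f v : ℤ)| + (G.dist u v : ℤ)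

/-- A graph is radio graceful if it has a radio labeling whose image is exactly
`{1, ..., |V(G)|}`. -/
def RadioGraceful {V : Type*} (G : SimpleGraph V) : Prop :=
  ∃ f : V → ℕ, IsRadioLabeling G f ∧ Set.range f = Set.Icc 1 (Nat.card V)

/-- The antipodal graph of `G`: vertices are adjacent iff their distance in `G`
equals the diameter of `G`. -/
def antipodalGraph {V : Type*} (G : SimpleGraph V) : SimpleGraph V where
  Adj u v := u ≠ v ∧ G.dist u v = G.diam
  symm := ⟨fun u v ⟨h1, h2⟩ => ⟨h1.symm, by rwa [SimpleGraph.dist_comm]⟩⟩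
  loopless := ⟨fun v h => h.1 rfl⟩

/-- A graph is traceable if it has a Hamiltonian path. -/
def Traceable {V : Type*} (G : SimpleGraph V) : Prop :=
  ∃ (u v : V) (p : G.Walk u v), p.IsPath ∧ ∀ w : V, w ∈ p.support

/-- `P` together with its complement forms a bipartition of `G`. -/
def IsBipartition {V : Type*} (G : SimpleGraph V) (P : Set V) : Prop :=
  ∀ u v : V, G.Adj u v → (u ∈ P ↔ v ∉ P)

/-- A graph is bipartite if its vertices can be split into two parts with all
edges between the parts. -/
def Bipartite {V : Type*} (G : SimpleGraph V) : Prop :=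
  ∃ P : Set V, IsBipartition G P

/-! Consecutive labels `n, n + 1` of a radio labelling onto `{1, …, |V|}` sit on vertices at
distance exactly `diam G`. In a connected bipartite graph of even diameter such vertices lie in
the same part, so running through the labels puts every vertex in one part, which is impossible
once there is an edge.

For the cage the diameter is 6: girth 12 makes the breadth-first layers around any vertex
`r` grow like a tree up to depth 5, with sizes `1, q + 1, (q + 1)q, …, (q + 1)q⁴`; double
counting the edges leaving layer 5 gives at least `q⁵` vertices at distance 6, and these layers
already exhaust all `2(q³ + 1)(q² + q + 1)` vertices. -/

section

open Finset

variable {V : Type*} {G : SimpleGraph V}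

namespace IsBipartition

variable {P : Set V}

theorem mem_iff_mem_iff_even_length (hP : IsBipartition G P) {u v : V} (p : G.Walk u v) :
    (u ∈ P ↔ v ∈ P) ↔ Even p.length := by
  induction p with
  | nil => simp
  | cons h p ih =>
    rw [Walk.length_cons, Nat.even_add_one, ← ih]
    have := hP _ _ h
    tauto

theorem mem_iff_mem_iff_even_dist (hP : IsBipartition G P) (hconn : G.Connected) (u v : V) :
    (u ∈ P ↔ v ∈ P) ↔ Even (G.dist u v) := by
  obtain ⟨p, hp⟩ := hconn.exists_walk_length_eq_dist u v
  rw [← hp]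
  exact hP.mem_iff_mem_iff_even_length p

theorem dist_eq_add_one_or_of_adj (hP : IsBipartition G P) (hconn : G.Connected) (r : V)
    {u w : V} (h : G.Adj u w) :
    G.dist r w = G.dist r u + 1 ∨ G.dist r u = G.dist r w + 1 := by
  have hne : G.dist r u ≠ G.dist r w := by
    intro heq
    have hu := hP.mem_iff_mem_iff_even_dist hconn r u
    have hw := hP.mem_iff_mem_iff_even_dist hconn r w
    rw [heq] at hu
    have := hP u w h
    tauto
  have := h.diff_dist_adj (u := r)
  omega

end IsBipartition

theorem SimpleGraph.Connected.dist_le_diam [Finite V] (hconn : G.Connected) (u v : V) :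
    G.dist u v ≤ G.diam :=
  have := hconn.nonempty
  SimpleGraph.dist_le_diam (connected_iff_ediam_ne_top.mp hconn)

namespace IsRadioLabeling

variable [Finite V] {f : V → ℕ}

theorem injective (hconn : G.Connected) (hf : IsRadioLabeling G f) : Function.Injective f := by
  intro u v huv
  by_contra hne
  have h := hf u v hne
  have hd := hconn.dist_le_diam u v
  rw [huv, sub_self, abs_zero] at h
  omega

theorem dist_eq_diam_of_eq_add_one (hconn : G.Connected) (hf : IsRadioLabeling G f) {v w : V}
    (h : f w = f v + 1) : G.dist v w = G.diam := by
  have hne : v ≠ w := by rintro rfl; omega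
  have hd := hconn.dist_le_diam v w
  have hrl := hf v w hne
  rw [h, Nat.cast_add, Nat.cast_one, sub_add_cancel_left, abs_neg, abs_one] at hrl
  omega

end IsRadioLabeling

theorem apply_eq_apply_of_range_eq_Icc {α : Type*} {f : V → ℕ} {n : ℕ}
    (hrange : Set.range f = Set.Icc 1 n) (hinj : Function.Injective f) {g : V → α}
    (hg : ∀ v w, f w = f v + 1 → g v = g w) (v w : V) : g v = g w := by
  have hmem : ∀ v, f v ∈ Set.Icc 1 n := fun v => hrange ▸ Set.mem_range_self v
  suffices h : ∀ k v w, f w = f v + k → g v = g w by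
    rcases le_total (f v) (f w) with hvw | hwv
    · exact h (f w - f v) v w (by omega)
    · exact (h (f v - f w) w v (by omega)).symm
  intro k
  induction k with
  | zero => exact fun v w h => congrArg g (hinj h.symm)
  | succ k ih =>
    intro v w h
    obtain ⟨hv, -⟩ := hmem v
    obtain ⟨-, hw⟩ := hmem w
    obtain ⟨x, hx⟩ : f v + k ∈ Set.range f := by
      rw [hrange]
      exact ⟨by omega, by omega⟩
    exact (ih v x hx).trans (hg x w (by omega))

theorem not_radioGraceful_of_even_diam [Finite V] [Nontrivial V] (hconn : G.Connected)
    (hbip : Bipartite G) (heven : Even G.diam) : ¬ RadioGraceful G := by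
  rintro ⟨f, hf, hrange⟩
  obtain ⟨P, hP⟩ := hbip
  have hsame : ∀ v w, f w = f v + 1 → (v ∈ P) = (w ∈ P) := fun v w h =>
    propext <| (hP.mem_iff_mem_iff_even_dist hconn v w).mpr <|
      (hf.dist_eq_diam_of_eq_add_one hconn h).symm ▸ heven
  obtain ⟨u⟩ := hconn.nonempty
  obtain ⟨w, huw⟩ := hconn.preconnected.exists_adj_of_nontrivial u
  have := apply_eq_apply_of_range_eq_Icc hrange (hf.injective hconn) hsame u w
  exact iff_not_self (this ▸ hP u w huw)

namespace SimpleGraph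

theorem egirth_le_two_mul_dist_of_ne {u v : V} {p q : G.Walk u v}
    (hp : p.length = G.dist u v) (hq : q.length = G.dist u v) (hpq : p ≠ q) :
    G.egirth ≤ (2 * G.dist u v : ℕ) := by
  obtain ⟨_, -, -, c, hc, hlen⟩ :=
    (p.isPath_of_length_eq_dist hp).exists_isCycle_length_le_add_of_ne
      (q.isPath_of_length_eq_dist hq) hpq
  exact (egirth_le_length hc).trans (Nat.cast_le.mpr (by omega))

theorem eq_of_adj_of_dist_eq (hconn : G.Connected) {r u a b : V} {i : ℕ}
    (hgirth : ((2 * (i + 1) : ℕ) : ℕ∞) < G.egirth) (hu : G.dist r u = i + 1)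
    (ha : G.Adj u a) (hb : G.Adj u b) (hda : G.dist r a = i) (hdb : G.dist r b = i) : a = b := by
  by_contra hab
  obtain ⟨pa, hpa⟩ := hconn.exists_walk_length_eq_dist a r
  obtain ⟨pb, hpb⟩ := hconn.exists_walk_length_eq_dist b r
  have hur : G.dist u r = i + 1 := by rw [dist_comm, hu]
  have hne : Walk.cons ha pa ≠ Walk.cons hb pb := fun h =>
    hab (by simpa using congrArg Walk.snd h)
  have := egirth_le_two_mul_dist_of_ne (p := .cons ha pa) (q := .cons hb pb)
    (by rw [Walk.length_cons, hpa, dist_comm, hda, hur])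
    (by rw [Walk.length_cons, hpb, dist_comm, hdb, hur]) hne
  rw [hur] at this
  exact hgirth.not_ge this

theorem exists_adj_dist_eq_of_dist_eq_add_one (hconn : G.Connected) {r u : V} {i : ℕ}
    (hu : G.dist r u = i + 1) : ∃ a, G.Adj u a ∧ G.dist r a = i := by
  obtain ⟨p, hp⟩ := hconn.exists_walk_length_eq_dist u r
  cases p with
  | nil => simp at hu
  | @cons _ a _ h t =>
    refine ⟨a, h, le_antisymm ?_ ?_⟩
    · have := G.dist_le t
      rw [Walk.length_cons, dist_comm, hu] at hp
      rw [dist_comm]; omega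
    · have := hconn.dist_triangle (u := r) (v := a) (w := u)
      rw [dist_eq_one_iff_adj.mpr h.symm] at this
      omega

variable [Fintype V]

noncomputable def distSphere (G : SimpleGraph V) (r : V) (n : ℕ) : Finset V :=
  {w | G.dist r w = n}

@[simp]
theorem mem_distSphere {r w : V} {n : ℕ} : w ∈ G.distSphere r n ↔ G.dist r w = n := by
  simp [distSphere]

theorem sum_card_distSphere_range (r : V) (n : ℕ) :
    ∑ j ∈ range n, #(G.distSphere r j) = #{w | G.dist r w < n} := by
  rw [card_eq_sum_card_fiberwise (f := G.dist r) (t := range n) (fun w hw => by simpa using hw)]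
  refine sum_congr rfl fun j hj => congrArg card ?_
  ext w
  simp only [mem_distSphere, mem_filter, mem_univ, true_and]
  have := mem_range.mp hj
  constructor <;> intro h <;> omega

variable [DecidableRel G.Adj] {P : Set V} {q i : ℕ} {r : V}

theorem card_filter_adj_distSphere_pred (hconn : G.Connected)
    (hgirth : ((2 * (i + 1) : ℕ) : ℕ∞) < G.egirth) {u : V} (hu : G.dist r u = i + 1) :
    #{a ∈ G.distSphere r i | G.Adj a u} = 1 := by
  obtain ⟨a, ha, hda⟩ := exists_adj_dist_eq_of_dist_eq_add_one hconn hu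
  rw [card_eq_one]
  refine ⟨a, eq_singleton_iff_unique_mem.mpr ⟨by simp [ha.symm, hda], fun b hb => ?_⟩⟩
  rw [mem_filter, mem_distSphere] at hb
  exact eq_of_adj_of_dist_eq hconn hgirth hu hb.2.symm ha hb.1 hda

theorem card_filter_adj_distSphere_succ (hP : IsBipartition G P) (hconn : G.Connected)
    (hreg : G.IsRegularOfDegree (q + 1)) (hgirth : ((2 * (i + 1) : ℕ) : ℕ∞) < G.egirth)
    {u : V} (hu : G.dist r u = i + 1) :
    #{w ∈ G.distSphere r (i + 2) | G.Adj u w} = q := by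
  have hsplit := card_filter_add_card_filter_not (s := G.neighborFinset u) (G.dist r · = i)
  rw [card_neighborFinset_eq_degree, hreg u] at hsplit
  have hdown :
      {w ∈ G.neighborFinset u | G.dist r w = i} = {a ∈ G.distSphere r i | G.Adj a u} := by
    ext w
    simp only [mem_filter, mem_neighborFinset, mem_distSphere, G.adj_comm u w]
    tauto
  have hup : {w ∈ G.neighborFinset u | ¬G.dist r w = i} =
      {w ∈ G.distSphere r (i + 2) | G.Adj u w} := by
    ext w
    simp only [mem_filter, mem_neighborFinset, mem_distSphere]
    constructor
    · rintro ⟨h, hne⟩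
      have := hP.dist_eq_add_one_or_of_adj hconn r h
      exact ⟨by omega, h⟩
    · rintro ⟨hd, h⟩
      exact ⟨h, by omega⟩
  rw [hdown, hup, card_filter_adj_distSphere_pred hconn hgirth hu] at hsplit
  omega

theorem card_distSphere_add_two (hP : IsBipartition G P) (hconn : G.Connected)
    (hreg : G.IsRegularOfDegree (q + 1)) (hgirth : ((2 * (i + 2) : ℕ) : ℕ∞) < G.egirth) :
    #(G.distSphere r (i + 2)) = q * #(G.distSphere r (i + 1)) := by
  have hgirth' : ((2 * (i + 1) : ℕ) : ℕ∞) < G.egirth :=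
    (Nat.cast_le.mpr (by omega)).trans_lt hgirth
  have := card_mul_eq_card_mul G.Adj (s := G.distSphere r (i + 1)) (t := G.distSphere r (i + 2))
    (m := q) (n := 1)
    (fun u hu => card_filter_adj_distSphere_succ hP hconn hreg hgirth' (mem_distSphere.mp hu))
    (fun w hw => card_filter_adj_distSphere_pred hconn hgirth (mem_distSphere.mp hw))
  rw [mul_one] at this
  rw [← this, mul_comm]

theorem card_distSphere_one (hreg : G.IsRegularOfDegree (q + 1)) :
    #(G.distSphere r 1) = q + 1 := by
  have : G.distSphere r 1 = G.neighborFinset r := by ext; simp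
  rw [this, card_neighborFinset_eq_degree, hreg r]

theorem card_distSphere_add_one (hP : IsBipartition G P) (hconn : G.Connected)
    (hreg : G.IsRegularOfDegree (q + 1)) :
    ∀ i, ((2 * (i + 1) : ℕ) : ℕ∞) < G.egirth → #(G.distSphere r (i + 1)) = (q + 1) * q ^ i
  | 0, _ => by simpa using card_distSphere_one hreg
  | i + 1, hgirth => by
    rw [card_distSphere_add_two hP hconn hreg hgirth,
      card_distSphere_add_one hP hconn hreg i ((Nat.cast_le.mpr (by omega)).trans_lt hgirth)]
    ring

theorem mul_card_distSphere_le (hP : IsBipartition G P) (hconn : G.Connected)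
    (hreg : G.IsRegularOfDegree (q + 1)) (hgirth : ((2 * (i + 1) : ℕ) : ℕ∞) < G.egirth) :
    #(G.distSphere r (i + 1)) * q ≤ #(G.distSphere r (i + 2)) * (q + 1) :=
  card_mul_le_card_mul G.Adj (s := G.distSphere r (i + 1)) (t := G.distSphere r (i + 2))
    (m := q) (n := q + 1)
    (fun u hu => (card_filter_adj_distSphere_succ hP hconn hreg hgirth (mem_distSphere.mp hu)).ge)
    (fun w _ => by
      rw [← hreg w, ← card_neighborFinset_eq_degree]
      exact card_le_card fun a ha => by simpa [G.adj_comm a w] using (mem_filter.mp ha).2)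

theorem dist_le_six_and_nonempty_distSphere_six (hq : 0 < q) (hP : IsBipartition G P)
    (hconn : G.Connected) (hreg : G.IsRegularOfDegree (q + 1)) (hgirth : 12 ≤ G.egirth)
    (hcard : Fintype.card V = 2 * (q ^ 3 + 1) * (q ^ 2 + q + 1)) (r : V) :
    (∀ w, G.dist r w ≤ 6) ∧ (G.distSphere r 6).Nonempty := by
  have hg : ((2 * (4 + 1) : ℕ) : ℕ∞) < G.egirth := lt_of_lt_of_le (by norm_num) hgirth
  have hS : ∀ i ≤ 4, #(G.distSphere r (i + 1)) = (q + 1) * q ^ i := fun i hi =>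
    card_distSphere_add_one hP hconn hreg i ((Nat.cast_le.mpr (by omega)).trans_lt hg)
  have hS0 : #(G.distSphere r 0) = 1 :=
    card_eq_one.mpr ⟨r, by ext; simp [hconn.dist_eq_zero_iff, eq_comm]⟩
  have hS6 : q ^ 5 ≤ #(G.distSphere r 6) := by
    have := mul_card_distSphere_le hP hconn hreg hg (r := r)
    rw [hS 4 le_rfl] at this
    exact Nat.le_of_mul_le_mul_right (by linarith) (Nat.succ_pos q)
  have hball : Fintype.card V ≤ #{w | G.dist r w < 7} := by
    rw [← sum_card_distSphere_range]
    simp only [sum_range_succ, sum_range_zero, hS0, hS 0 (by norm_num), hS 1 (by norm_num),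
      hS 2 (by norm_num), hS 3 (by norm_num), hS 4 (by norm_num)]
    rw [hcard]
    linarith
  have huniv : ({w | G.dist r w < 7} : Finset V) = univ :=
    eq_univ_of_card _ (le_antisymm (card_le_univ _) hball)
  refine ⟨fun w => ?_, card_pos.mp ((pow_pos hq 5).trans_le hS6)⟩
  have : w ∈ ({w | G.dist r w < 7} : Finset V) := by rw [huniv]; exact mem_univ w
  simp only [mem_filter, mem_univ, true_and] at this
  omega

theorem diam_eq_six (hq : 0 < q) (hP : IsBipartition G P) (hconn : G.Connected)
    (hreg : G.IsRegularOfDegree (q + 1)) (hgirth : 12 ≤ G.egirth)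
    (hcard : Fintype.card V = 2 * (q ^ 3 + 1) * (q ^ 2 + q + 1)) : G.diam = 6 := by
  have := hconn.nonempty
  obtain ⟨u, v, huv⟩ := G.exists_dist_eq_diam
  obtain ⟨hle, w, hw⟩ := dist_le_six_and_nonempty_distSphere_six hq hP hconn hreg hgirth hcard u
  have := hconn.dist_le_diam u w
  have := hle v
  rw [mem_distSphere] at hw
  omega

end SimpleGraph

end

theorem not_radioGraceful_hexagon_cage
    {V : Type*} [Fintype V] (G : SimpleGraph V) [DecidableRel G.Adj]
    (q : ℕ) (hq : 2 ≤ q)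
    (hconn : G.Connected) (hbip : Bipartite G)
    (hreg : G.IsRegularOfDegree (q + 1)) (hgirth : G.girth = 12)
    (hcard : Fintype.card V = 2 * (q ^ 3 + 1) * (q ^ 2 + q + 1)) :
    ¬ RadioGraceful G := by
  obtain ⟨P, hP⟩ := hbip
  have hegirth : G.egirth = 12 := (ENat.toNat_eq_iff (by norm_num)).mp hgirth
  have hdiam : G.diam = 6 := diam_eq_six (by omega) hP hconn hreg hegirth.ge hcard
  have : Nontrivial V := nontrivial_of_diam_ne_zero (G := G) (by omega)
  exact not_radioGraceful_of_even_diam hconn ⟨P, hP⟩ (by rw [hdiam]; decide)
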